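/- (Ranged dwell-time, affine conditions.) Let 0 < T_min ≤ T_max < ∞ and let A, J be real n×n matrices. Suppose there exist real symmetric positive definite n×n matrices P and Z, real symmetric n×n matrices Q and U, a real n×n matrix R, and a real n×2n matrix N such that Ψ(T) and Φ(T) are negative definite for both T = T_min and T = T_max. Then ℐ(P,A,J,θ) is negative definite for every θ ∈ [T_min, T_max]. -/

import Mathlib

/-!
`Ψ(T)` is affine in `T`. `Φ(T)` is not, because of the block `−Z/T`, but at
`θ = a T₁ + b T₂` it is the same convex combination of `Sᵢᵀ Φ(Tᵢ) Sᵢ` with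
`Sᵢ = diag(I, (Tᵢ/θ) I)`. So both conditions hold on the whole of `[T_min, T_max]`.

Fix `θ` and `x₀ ≠ 0`. Let `x(s) = exp(sA) J x₀` be the flow after the jump and let
`ζ = x − J x₀`. Along this flow, the looped functional `W` has derivative
`(1 − t/θ) χᵀΨ(θ)χ + (t/θ) ξᵀΦ(θ)ξ + (ζᵀZζ/t − ∫₀ᵗ (Ax)ᵀZ(Ax))` at `t`, where
`χ = (x(t), x₀)` and `ξ = (χ, −(θ/t) ζ)`. The last term is `≤ 0` by Jensen's
inequality, so `W` is strictly decreasing on `[0, θ]`. Since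
`W(θ) − W(0) = θ x₀ᵀ ℐ(P,A,J,θ) x₀`, it follows that `ℐ(P,A,J,θ) ≺ 0`.
-/

open Matrix Filter

/-- Matrix exponential of a real square matrix. -/
noncomputable def mexp {n : ℕ} (A : Matrix (Fin n) (Fin n) ℝ) : Matrix (Fin n) (Fin n) ℝ :=
  NormedSpace.exp A

/-- ℐ(P,A,J,T) := Jᵀ·exp(T·Aᵀ)·P·exp(T·A)·J − P. -/
noncomputable def scrI {n : ℕ} (P A J : Matrix (Fin n) (Fin n) ℝ) (T : ℝ) :
    Matrix (Fin n) (Fin n) ℝ :=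
  Jᵀ * mexp (T • Aᵀ) * P * mexp (T • A) * J - P

/-- xᵀMx < 0 for all x ≠ 0. -/
def negDef {m : Type*} [Fintype m] (M : Matrix m m ℝ) : Prop :=
  ∀ x : m → ℝ, x ≠ 0 → x ⬝ᵥ M.mulVec x < 0

/-- xᵀMx > 0 for all x ≠ 0. -/
def posDef {m : Type*} [Fintype m] (M : Matrix m m ℝ) : Prop :=
  ∀ x : m → ℝ, x ≠ 0 → 0 < x ⬝ᵥ M.mulVec x

/-- xᵀMx ≥ 0 for all x. -/
def posSemidef {m : Type*} [Fintype m] (M : Matrix m m ℝ) : Prop :=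
  ∀ x : m → ℝ, 0 ≤ x ⬝ᵥ M.mulVec x

/-- The n×2n block matrix `[I 0]`. -/
def Mxb (n : ℕ) : Matrix (Fin n) (Fin n ⊕ Fin n) ℝ := Matrix.fromCols 1 0

/-- The n×2n block matrix `[0 I]`. -/
def Mmb (n : ℕ) : Matrix (Fin n) (Fin n ⊕ Fin n) ℝ := Matrix.fromCols 0 1

/-- The n×2n block matrix `[I −J]`. -/
def Mzb {n : ℕ} (J : Matrix (Fin n) (Fin n) ℝ) : Matrix (Fin n) (Fin n ⊕ Fin n) ℝ :=
  Matrix.fromCols 1 (-J)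

/-- He[X] := X + Xᵀ. -/
def He {m : Type*} (X : Matrix m m ℝ) : Matrix m m ℝ := X + Xᵀ

/-- The 2n×2n matrix `F₀`. -/
def F0 {n : ℕ} (T : ℝ) (A J P Q R : Matrix (Fin n) (Fin n) ℝ)
    (N : Matrix (Fin n) (Fin n ⊕ Fin n) ℝ) :
    Matrix (Fin n ⊕ Fin n) (Fin n ⊕ Fin n) ℝ :=
  T • ((Mxb n)ᵀ * (Aᵀ * P + P * A) * Mxb n) - (Mzb J)ᵀ * Q * Mzb J
    + (Mmb n)ᵀ * (Jᵀ * P * J - P) * Mmb n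
    + He (Nᵀ * Mzb J - (Mzb J)ᵀ * R * Mxb n)

/-- The 2n×2n matrix `F₂`. -/
def F2 {n : ℕ} (A J Q R Z : Matrix (Fin n) (Fin n) ℝ) :
    Matrix (Fin n ⊕ Fin n) (Fin n ⊕ Fin n) ℝ :=
  He ((Mxb n)ᵀ * Aᵀ * Q * Mzb J + (Mxb n)ᵀ * Aᵀ * R * Mxb n + (Mzb J)ᵀ * R * A * Mxb n)
    + (Mxb n)ᵀ * Aᵀ * Z * A * Mxb n

/-- The 2n×2n matrix `F₃`. -/
def F3 {n : ℕ} (J U : Matrix (Fin n) (Fin n) ℝ) :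
    Matrix (Fin n ⊕ Fin n) (Fin n ⊕ Fin n) ℝ :=
  (Mmb n)ᵀ * Jᵀ * U * J * Mmb n

/-- The 2n×2n matrix `Ψ(T) = F₀ + T·(F₂ + F₃)`. -/
def Psi {n : ℕ} (T : ℝ) (A J P Z Q U R : Matrix (Fin n) (Fin n) ℝ)
    (N : Matrix (Fin n) (Fin n ⊕ Fin n) ℝ) :
    Matrix (Fin n ⊕ Fin n) (Fin n ⊕ Fin n) ℝ :=
  F0 T A J P Q R N + T • (F2 A J Q R Z + F3 J U)

/-- The 3n×3n block matrix `Φ(T) = [[F₀ − T·F₃, Nᵀ],[N, −Z/T]]`. -/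
noncomputable def Phi {n : ℕ} (T : ℝ) (A J P Z Q U R : Matrix (Fin n) (Fin n) ℝ)
    (N : Matrix (Fin n) (Fin n ⊕ Fin n) ℝ) :
    Matrix ((Fin n ⊕ Fin n) ⊕ Fin n) ((Fin n ⊕ Fin n) ⊕ Fin n) ℝ :=
  Matrix.fromBlocks (F0 T A J P Q R N - T • F3 J U) Nᵀ N (-(T⁻¹ • Z))

section NegDef
variable {m k : Type*} [Fintype m] [Fintype k]

lemma dotProduct_transpose_mulVec' (L : Matrix k m ℝ) (v : m → ℝ) (w : k → ℝ) :
    v ⬝ᵥ Lᵀ *ᵥ w = (L *ᵥ v) ⬝ᵥ w := by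
  rw [dotProduct_mulVec, vecMul_transpose]

lemma dotProduct_transpose_mul_mulVec (L L' : Matrix k m ℝ) (v w : m → ℝ) :
    v ⬝ᵥ (Lᵀ * L') *ᵥ w = (L *ᵥ v) ⬝ᵥ (L' *ᵥ w) := by
  rw [← mulVec_mulVec, dotProduct_transpose_mulVec']

lemma dotProduct_transpose_mul_mul_mulVec (L : Matrix k m ℝ) (M : Matrix k k ℝ)
    (L' : Matrix k m ℝ) (v w : m → ℝ) :
    v ⬝ᵥ (Lᵀ * M * L') *ᵥ w = (L *ᵥ v) ⬝ᵥ M *ᵥ (L' *ᵥ w) := by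
  rw [← mulVec_mulVec, ← mulVec_mulVec, dotProduct_transpose_mulVec']

lemma posDef.posSemidef {M : Matrix m m ℝ} (hM : posDef M) : posSemidef M := fun x => by
  rcases eq_or_ne x 0 with rfl | hx
  · simp
  · exact (hM x hx).le

lemma negDef.transpose_mul_mul_same {M : Matrix k k ℝ} (hM : negDef M) {D : Matrix k m ℝ}
    (hD : Function.Injective D.mulVec) : negDef (Dᵀ * M * D) := fun v hv => by
  rw [dotProduct_transpose_mul_mul_mulVec]
  exact hM _ fun h => hv (hD (h.trans (mulVec_zero D).symm))

lemma convex_setOf_negDef : Convex ℝ {M : Matrix m m ℝ | negDef M} := by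
  intro M₁ h₁ M₂ h₂ a b ha hb hab x hx
  simp only [add_mulVec, smul_mulVec, dotProduct_add, dotProduct_smul, smul_eq_mul]
  rcases ha.eq_or_lt with rfl | ha
  · obtain rfl : b = 1 := by linarith
    simpa using h₂ x hx
  · linarith [mul_neg_of_pos_of_neg ha (h₁ x hx), mul_nonpos_of_nonneg_of_nonpos hb (h₂ x hx).le]

end NegDef

section Interval
variable {n : ℕ} {A J P Z Q U R : Matrix (Fin n) (Fin n) ℝ} {N : Matrix (Fin n) (Fin n ⊕ Fin n) ℝ}

def scaleLastBlock (c : ℝ) : Matrix ((Fin n ⊕ Fin n) ⊕ Fin n) ((Fin n ⊕ Fin n) ⊕ Fin n) ℝ :=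
  fromBlocks 1 0 0 (c • 1)

lemma injective_mulVec_scaleLastBlock {c : ℝ} (hc : c ≠ 0) :
    Function.Injective (scaleLastBlock (n := n) c).mulVec :=
  mulVec_injective_of_isUnit <| IsUnit.of_mul_eq_one (scaleLastBlock c⁻¹) <| by
    simp [scaleLastBlock, fromBlocks_multiply, smul_smul, hc]

lemma Psi_mul_add_mul {a b : ℝ} (hab : a + b = 1) (T₁ T₂ : ℝ) :
    Psi (a * T₁ + b * T₂) A J P Z Q U R N
      = a • Psi T₁ A J P Z Q U R N + b • Psi T₂ A J P Z Q U R N := by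
  obtain rfl : b = 1 - a := by linarith
  unfold Psi F0
  module

lemma Phi_mul_add_mul {a b T₁ T₂ θ : ℝ} (hab : a + b = 1) (hθ : a * T₁ + b * T₂ = θ)
    (hθ₀ : θ ≠ 0) :
    Phi θ A J P Z Q U R N
      = a • ((scaleLastBlock (T₁ / θ))ᵀ * Phi T₁ A J P Z Q U R N * scaleLastBlock (T₁ / θ))
        + b • ((scaleLastBlock (T₂ / θ))ᵀ * Phi T₂ A J P Z Q U R N * scaleLastBlock (T₂ / θ)) := by
  subst hθ
  simp only [Phi, scaleLastBlock, fromBlocks_transpose, fromBlocks_multiply, fromBlocks_smul,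
    fromBlocks_add, transpose_one, transpose_zero, transpose_smul, Matrix.one_mul, Matrix.mul_one,
    Matrix.mul_zero, Matrix.zero_mul, add_zero, zero_add, Matrix.mul_smul, Matrix.smul_mul,
    smul_smul]
  obtain rfl : b = 1 - a := by linarith
  unfold F0
  congr 1 <;> match_scalars <;> field_simp <;> ring

lemma negDef_Psi_of_mem_Icc {T₁ T₂ θ : ℝ} (h₁ : negDef (Psi T₁ A J P Z Q U R N))
    (h₂ : negDef (Psi T₂ A J P Z Q U R N)) (hθ : θ ∈ Set.Icc T₁ T₂) :
    negDef (Psi θ A J P Z Q U R N) := by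
  obtain ⟨a, b, ha, hb, hab, rfl⟩ := (segment_eq_Icc (hθ.1.trans hθ.2)).symm ▸ hθ
  rw [smul_eq_mul, smul_eq_mul, Psi_mul_add_mul hab]
  exact convex_setOf_negDef h₁ h₂ ha hb hab

lemma negDef_Phi_of_mem_Icc {T₁ T₂ θ : ℝ} (hT₁ : 0 < T₁) (h₁ : negDef (Phi T₁ A J P Z Q U R N))
    (h₂ : negDef (Phi T₂ A J P Z Q U R N)) (hθ : θ ∈ Set.Icc T₁ T₂) :
    negDef (Phi θ A J P Z Q U R N) := by
  have hθ₀ : θ ≠ 0 := (hT₁.trans_le hθ.1).ne'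
  have hT₂ : T₂ ≠ 0 := (hT₁.trans_le (hθ.1.trans hθ.2)).ne'
  obtain ⟨a, b, ha, hb, hab, hθab⟩ := (segment_eq_Icc (hθ.1.trans hθ.2)).symm ▸ hθ
  rw [smul_eq_mul, smul_eq_mul] at hθab
  rw [Phi_mul_add_mul hab hθab hθ₀]
  exact convex_setOf_negDef
    (h₁.transpose_mul_mul_same (injective_mulVec_scaleLastBlock (div_ne_zero hT₁.ne' hθ₀)))
    (h₂.transpose_mul_mul_same (injective_mulVec_scaleLastBlock (div_ne_zero hT₂ hθ₀))) ha hb hab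

end Interval

section QuadForm
variable {n : ℕ} (A J P Z Q U R : Matrix (Fin n) (Fin n) ℝ) (N : Matrix (Fin n) (Fin n ⊕ Fin n) ℝ)
  (T : ℝ) (u v : Fin n → ℝ)

@[simp] lemma Mxb_mulVec : Mxb n *ᵥ Sum.elim u v = u := by simp [Mxb]

@[simp] lemma Mmb_mulVec : Mmb n *ᵥ Sum.elim u v = v := by simp [Mmb]

@[simp] lemma Mzb_mulVec : Mzb J *ᵥ Sum.elim u v = u - J *ᵥ v := by
  simp [Mzb, neg_mulVec, sub_eq_add_neg]

lemma dotProduct_He_mulVec {m : Type*} [Fintype m] (X : Matrix m m ℝ) (w : m → ℝ) :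
    w ⬝ᵥ He X *ᵥ w = 2 * (w ⬝ᵥ X *ᵥ w) := by
  rw [He, add_mulVec, dotProduct_add, dotProduct_transpose_mulVec, two_mul]

lemma dotProduct_F0_mulVec :
    Sum.elim u v ⬝ᵥ F0 T A J P Q R N *ᵥ Sum.elim u v =
      T * (u ⬝ᵥ (Aᵀ * P + P * A) *ᵥ u) - (u - J *ᵥ v) ⬝ᵥ Q *ᵥ (u - J *ᵥ v)
      + v ⬝ᵥ (Jᵀ * P * J - P) *ᵥ v
      + 2 * ((N *ᵥ Sum.elim u v) ⬝ᵥ (u - J *ᵥ v) - (u - J *ᵥ v) ⬝ᵥ R *ᵥ u) := by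
  simp only [F0, add_mulVec, sub_mulVec, smul_mulVec, dotProduct_add, dotProduct_sub,
    dotProduct_smul, smul_eq_mul, dotProduct_He_mulVec, dotProduct_transpose_mul_mul_mulVec,
    dotProduct_transpose_mul_mulVec, Mxb_mulVec, Mmb_mulVec, Mzb_mulVec]

lemma dotProduct_F2_mulVec :
    Sum.elim u v ⬝ᵥ F2 A J Q R Z *ᵥ Sum.elim u v =
      2 * ((A *ᵥ u) ⬝ᵥ Q *ᵥ (u - J *ᵥ v) + (A *ᵥ u) ⬝ᵥ R *ᵥ u + (u - J *ᵥ v) ⬝ᵥ R *ᵥ (A *ᵥ u))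
      + (A *ᵥ u) ⬝ᵥ Z *ᵥ (A *ᵥ u) := by
  simp only [F2, add_mulVec, dotProduct_add, dotProduct_He_mulVec, ← mulVec_mulVec,
    dotProduct_transpose_mulVec', Mxb_mulVec, Mzb_mulVec]

lemma dotProduct_F3_mulVec :
    Sum.elim u v ⬝ᵥ F3 J U *ᵥ Sum.elim u v = (J *ᵥ v) ⬝ᵥ U *ᵥ (J *ᵥ v) := by
  simp only [F3, ← mulVec_mulVec, dotProduct_transpose_mulVec', Mmb_mulVec]

lemma dotProduct_Phi_mulVec (w : Fin n → ℝ) :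
    Sum.elim (Sum.elim u v) w ⬝ᵥ Phi T A J P Z Q U R N *ᵥ Sum.elim (Sum.elim u v) w =
      Sum.elim u v ⬝ᵥ F0 T A J P Q R N *ᵥ Sum.elim u v - T * ((J *ᵥ v) ⬝ᵥ U *ᵥ (J *ᵥ v))
      + 2 * ((N *ᵥ Sum.elim u v) ⬝ᵥ w) - T⁻¹ * (w ⬝ᵥ Z *ᵥ w) := by
  rw [Phi, fromBlocks_mulVec, sumElim_dotProduct_sumElim]
  simp only [Sum.elim_comp_inl, Sum.elim_comp_inr, sub_mulVec, neg_mulVec, smul_mulVec,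
    dotProduct_add, dotProduct_sub, dotProduct_neg, dotProduct_smul, smul_eq_mul,
    dotProduct_F3_mulVec, dotProduct_transpose_mulVec']
  rw [dotProduct_comm w (N *ᵥ _)]
  ring

end QuadForm

section Calculus
variable {m k : Type*} [Fintype m] [Fintype k] {t : ℝ}

lemma HasDerivAt.dotProduct {u v : ℝ → m → ℝ} {u' v' : m → ℝ} (hu : HasDerivAt u u' t)
    (hv : HasDerivAt v v' t) : HasDerivAt (fun s => u s ⬝ᵥ v s) (u' ⬝ᵥ v t + u t ⬝ᵥ v') t := by
  have h : HasDerivAt (fun s => ∑ i, u s i * v s i) (∑ i, (u' i * v t i + u t i * v' i)) t :=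
    HasDerivAt.fun_sum fun i _ => (hasDerivAt_pi.1 hu i).mul (hasDerivAt_pi.1 hv i)
  simpa [_root_.dotProduct, Finset.sum_add_distrib] using h

lemma HasDerivAt.const_mulVec (M : Matrix k m ℝ) {v : ℝ → m → ℝ} {v' : m → ℝ}
    (hv : HasDerivAt v v' t) : HasDerivAt (fun s => M *ᵥ v s) (M *ᵥ v') t :=
  M.mulVecLin.toContinuousLinearMap.hasFDerivAt.comp_hasDerivAt t hv

attribute [local instance] Matrix.linftyOpNormedRing Matrix.linftyOpNormedAlgebra in
lemma hasDerivAt_mexp_smul_mulVec {n : ℕ} (A : Matrix (Fin n) (Fin n) ℝ) (v : Fin n → ℝ)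
    (t : ℝ) : HasDerivAt (fun s => mexp (s • A) *ᵥ v) (A *ᵥ (mexp (t • A) *ᵥ v)) t := by
  rw [mulVec_mulVec]
  exact ((mulVecBilin ℝ ℝ).flip v).toContinuousLinearMap.hasFDerivAt.comp_hasDerivAt t
    (hasDerivAt_exp_smul_const' (𝕂 := ℝ) A t)

lemma dotProduct_sub_mulVec_le_mul_integral {Z : Matrix m m ℝ} (hZ : posSemidef Z)
    {y y' : ℝ → m → ℝ} (hy : ∀ u, HasDerivAt y (y' u) u) (hy' : Continuous y') (ht : 0 < t) :
    (y t - y 0) ⬝ᵥ Z *ᵥ (y t - y 0) ≤ t * ∫ u in 0..t, y' u ⬝ᵥ Z *ᵥ y' u := by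
  set ζ := y t - y 0
  set w := (Z + Zᵀ) *ᵥ ζ
  have hlin : ∫ u in 0..t, y' u ⬝ᵥ w = 2 * (ζ ⬝ᵥ Z *ᵥ ζ) := by
    rw [intervalIntegral.integral_eq_sub_of_hasDerivAt
      (fun u _ => by simpa using (hy u).dotProduct (hasDerivAt_const u w))
      ((by fun_prop : Continuous fun u => y' u ⬝ᵥ w).intervalIntegrable _ _), ← sub_dotProduct,
      show w = (Z + Zᵀ) *ᵥ ζ from rfl, add_mulVec, dotProduct_add, dotProduct_transpose_mulVec,
      two_mul]
  have hexpand : ∀ u, (t • y' u - ζ) ⬝ᵥ Z *ᵥ (t • y' u - ζ)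
      = t ^ 2 * (y' u ⬝ᵥ Z *ᵥ y' u) - t * (y' u ⬝ᵥ w) + ζ ⬝ᵥ Z *ᵥ ζ := by
    intro u
    simp only [w, mulVec_sub, mulVec_smul, add_mulVec, dotProduct_sub, sub_dotProduct,
      dotProduct_add, dotProduct_smul, smul_dotProduct, smul_eq_mul, dotProduct_transpose_mulVec]
    ring
  have hnonneg : 0 ≤ ∫ u in 0..t, (t • y' u - ζ) ⬝ᵥ Z *ᵥ (t • y' u - ζ) :=
    intervalIntegral.integral_nonneg ht.le fun u _ => hZ _
  simp only [hexpand] at hnonneg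
  rw [intervalIntegral.integral_add, intervalIntegral.integral_sub,
    intervalIntegral.integral_const_mul, intervalIntegral.integral_const_mul, hlin,
    intervalIntegral.integral_const, smul_eq_mul] at hnonneg
  · nlinarith
  all_goals exact Continuous.intervalIntegrable (by fun_prop) _ _

end Calculus

section LoopedFunctional
variable {n : ℕ} (A J P Z Q U R : Matrix (Fin n) (Fin n) ℝ)

noncomputable def loopedFunctional (θ : ℝ) (x : ℝ → Fin n → ℝ) (x₀ : Fin n → ℝ) (s : ℝ) : ℝ :=
  θ * (x s ⬝ᵥ P *ᵥ x s) + s * (x₀ ⬝ᵥ (Jᵀ * P * J - P) *ᵥ x₀)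
    + (θ - s) * ((x s - J *ᵥ x₀) ⬝ᵥ Q *ᵥ (x s - J *ᵥ x₀) + 2 * ((x s - J *ᵥ x₀) ⬝ᵥ R *ᵥ x s)
      + ∫ u in 0..s, (A *ᵥ x u) ⬝ᵥ Z *ᵥ (A *ᵥ x u))
    + s * (θ - s) * ((J *ᵥ x₀) ⬝ᵥ U *ᵥ (J *ᵥ x₀))

variable {A J P Z Q U R} {θ : ℝ} {x : ℝ → Fin n → ℝ} {x₀ : Fin n → ℝ}

lemma loopedFunctional_zero (hx_zero : x 0 = J *ᵥ x₀) :
    loopedFunctional A J P Z Q U R θ x x₀ 0 = θ * ((J *ᵥ x₀) ⬝ᵥ P *ᵥ (J *ᵥ x₀)) := by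
  simp [loopedFunctional, hx_zero]

lemma loopedFunctional_self :
    loopedFunctional A J P Z Q U R θ x x₀ θ
      = θ * (x θ ⬝ᵥ P *ᵥ x θ) + θ * (x₀ ⬝ᵥ (Jᵀ * P * J - P) *ᵥ x₀) := by
  simp [loopedFunctional]

lemma continuous_loopedFunctional (hx : Continuous x) :
    Continuous (loopedFunctional A J P Z Q U R θ x x₀) := by
  have hG : Continuous fun s => ∫ u in 0..s, (A *ᵥ x u) ⬝ᵥ Z *ᵥ (A *ᵥ x u) :=
    intervalIntegral.continuous_primitive
      (fun _ _ => Continuous.intervalIntegrable (by fun_prop) _ _) 0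
  unfold loopedFunctional
  fun_prop

lemma hasDerivAt_loopedFunctional (N : Matrix (Fin n) (Fin n ⊕ Fin n) ℝ) (hQ : Q.IsSymm)
    (hx : ∀ t, HasDerivAt x (A *ᵥ x t) t) (hθ : θ ≠ 0) {t : ℝ} (ht : t ≠ 0) :
    HasDerivAt (loopedFunctional A J P Z Q U R θ x x₀)
      ((1 - t / θ) * (Sum.elim (x t) x₀ ⬝ᵥ Psi θ A J P Z Q U R N *ᵥ Sum.elim (x t) x₀)
        + t / θ * (Sum.elim (Sum.elim (x t) x₀) (-(θ / t) • (x t - J *ᵥ x₀)) ⬝ᵥ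
            Phi θ A J P Z Q U R N *ᵥ Sum.elim (Sum.elim (x t) x₀) (-(θ / t) • (x t - J *ᵥ x₀)))
        + ((x t - J *ᵥ x₀) ⬝ᵥ Z *ᵥ (x t - J *ᵥ x₀) / t
          - ∫ u in 0..t, (A *ᵥ x u) ⬝ᵥ Z *ᵥ (A *ᵥ x u))) t := by
  have hxc : Continuous x := continuous_iff_continuousAt.2 fun t => (hx t).continuousAt
  have hζ : HasDerivAt (fun s => x s - J *ᵥ x₀) (A *ᵥ x t) t := (hx t).sub_const _
  have hG : HasDerivAt (fun s => ∫ u in 0..s, (A *ᵥ x u) ⬝ᵥ Z *ᵥ (A *ᵥ x u))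
      ((A *ᵥ x t) ⬝ᵥ Z *ᵥ (A *ᵥ x t)) t :=
    ((by fun_prop : Continuous fun u => (A *ᵥ x u) ⬝ᵥ Z *ᵥ (A *ᵥ x u)).integral_hasStrictDerivAt
      0 t).hasDerivAt
  have hθs : HasDerivAt (fun s => θ - s) (-1) t := by simpa using (hasDerivAt_id t).const_sub θ
  have h := ((((hx t).dotProduct ((hx t).const_mulVec P)).const_mul θ).add
    ((hasDerivAt_id t).mul_const (x₀ ⬝ᵥ (Jᵀ * P * J - P) *ᵥ x₀))).add
    (hθs.mul (((hζ.dotProduct (hζ.const_mulVec Q)).add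
      ((hζ.dotProduct ((hx t).const_mulVec R)).const_mul 2)).add hG)) |>.add
    (((hasDerivAt_id t).mul hθs).mul_const ((J *ᵥ x₀) ⬝ᵥ U *ᵥ (J *ᵥ x₀)))
  unfold loopedFunctional
  refine h.congr_deriv ?_
  have hQswap : (x t - J *ᵥ x₀) ⬝ᵥ Q *ᵥ (A *ᵥ x t) = (A *ᵥ x t) ⬝ᵥ Q *ᵥ (x t - J *ᵥ x₀) := by
    rw [← dotProduct_transpose_mulVec, hQ.eq]
  simp only [Pi.add_apply, id_eq]
  rw [Psi, add_mulVec, dotProduct_add, smul_mulVec, dotProduct_smul, add_mulVec, dotProduct_add,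
    dotProduct_F0_mulVec, dotProduct_F2_mulVec, dotProduct_F3_mulVec, dotProduct_Phi_mulVec,
    dotProduct_F0_mulVec, add_mulVec, dotProduct_add, ← mulVec_mulVec, ← mulVec_mulVec,
    dotProduct_transpose_mulVec']
  simp only [hQswap, smul_eq_mul, dotProduct_smul, smul_dotProduct, mulVec_smul]
  field_simp
  ring

lemma strictAntiOn_loopedFunctional {N : Matrix (Fin n) (Fin n ⊕ Fin n) ℝ} (hθ : 0 < θ)
    (hQ : Q.IsSymm) (hZ : posSemidef Z)
    (hΨ : negDef (Psi θ A J P Z Q U R N)) (hΦ : negDef (Phi θ A J P Z Q U R N))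
    (hx : ∀ t, HasDerivAt x (A *ᵥ x t) t) (hx_zero : x 0 = J *ᵥ x₀) (hx₀ : x₀ ≠ 0) :
    StrictAntiOn (loopedFunctional A J P Z Q U R θ x x₀) (Set.Icc 0 θ) := by
  have hxc : Continuous x := continuous_iff_continuousAt.2 fun t => (hx t).continuousAt
  refine strictAntiOn_of_deriv_neg (convex_Icc 0 θ) (continuous_loopedFunctional hxc).continuousOn
    fun t ht => ?_
  rw [interior_Icc] at ht
  rw [(hasDerivAt_loopedFunctional N hQ hx hθ.ne' ht.1.ne').deriv]
  have hχ : Sum.elim (x t) x₀ ≠ 0 := fun h => hx₀ (funext fun i => congrFun h (Sum.inr i))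
  have hψ := hΨ _ hχ
  have hφ := hΦ (Sum.elim (Sum.elim (x t) x₀) (-(θ / t) • (x t - J *ᵥ x₀)))
    fun h => hχ (funext fun i => congrFun h (Sum.inl i))
  have hJensen := dotProduct_sub_mulVec_le_mul_integral hZ hx (by fun_prop) ht.1
  rw [hx_zero] at hJensen
  have hremainder := sub_nonpos.2 ((div_le_iff₀' ht.1).2 hJensen)
  have hc₁ : 0 < 1 - t / θ := by rw [sub_pos, div_lt_one hθ]; exact ht.2
  have hc₂ : 0 < t / θ := div_pos ht.1 hθ
  linarith [mul_neg_of_pos_of_neg hc₁ hψ, mul_neg_of_pos_of_neg hc₂ hφ]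

end LoopedFunctional

lemma dotProduct_scrI_mulVec {n : ℕ} (P A J : Matrix (Fin n) (Fin n) ℝ) (θ : ℝ)
    (x₀ : Fin n → ℝ) :
    x₀ ⬝ᵥ scrI P A J θ *ᵥ x₀ =
      (mexp (θ • A) *ᵥ (J *ᵥ x₀)) ⬝ᵥ P *ᵥ (mexp (θ • A) *ᵥ (J *ᵥ x₀)) - x₀ ⬝ᵥ P *ᵥ x₀ := by
  have hexp : mexp (θ • Aᵀ) = (mexp (θ • A))ᵀ := by
    rw [mexp, mexp, ← transpose_smul, Matrix.exp_transpose]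
  have hsandwich : Jᵀ * (mexp (θ • A))ᵀ * P * mexp (θ • A) * J
      = (mexp (θ • A) * J)ᵀ * P * (mexp (θ • A) * J) := by
    simp only [transpose_mul, Matrix.mul_assoc]
  rw [scrI, sub_mulVec, dotProduct_sub, hexp, hsandwich, dotProduct_transpose_mul_mul_mulVec,
    ← mulVec_mulVec]

theorem negDef_scrI_of_negDef_Psi_Phi {n : ℕ} {A J P Z Q U R : Matrix (Fin n) (Fin n) ℝ}
    {N : Matrix (Fin n) (Fin n ⊕ Fin n) ℝ} {θ : ℝ} (hθ : 0 < θ) (hQ : Q.IsSymm)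
    (hZ : posSemidef Z) (hΨ : negDef (Psi θ A J P Z Q U R N))
    (hΦ : negDef (Phi θ A J P Z Q U R N)) : negDef (scrI P A J θ) := by
  intro x₀ hx₀
  set x : ℝ → Fin n → ℝ := fun s => mexp (s • A) *ᵥ (J *ᵥ x₀)
  have hx_zero : x 0 = J *ᵥ x₀ := by simp [x, mexp]
  have hdecr := strictAntiOn_loopedFunctional hθ hQ hZ hΨ hΦ
    (hasDerivAt_mexp_smul_mulVec A _) hx_zero hx₀ (Set.left_mem_Icc.2 hθ.le)
    (Set.right_mem_Icc.2 hθ.le) hθ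
  have hJPJ : x₀ ⬝ᵥ (Jᵀ * P * J - P) *ᵥ x₀ = (J *ᵥ x₀) ⬝ᵥ P *ᵥ (J *ᵥ x₀) - x₀ ⬝ᵥ P *ᵥ x₀ := by
    rw [sub_mulVec, dotProduct_sub, dotProduct_transpose_mul_mul_mulVec]
  rw [loopedFunctional_self, loopedFunctional_zero hx_zero, hJPJ, mul_sub] at hdecr
  have key : θ * (x₀ ⬝ᵥ scrI P A J θ *ᵥ x₀) < 0 := by
    rw [dotProduct_scrI_mulVec]
    change θ * (x θ ⬝ᵥ P *ᵥ x θ - x₀ ⬝ᵥ P *ᵥ x₀) < 0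
    linarith [mul_sub θ (x θ ⬝ᵥ P *ᵥ x θ) (x₀ ⬝ᵥ P *ᵥ x₀)]
  exact neg_of_mul_neg_right key hθ.le

theorem stmt7_general {n : ℕ} (Tmin Tmax : ℝ) (h1 : 0 < Tmin)
    (A J : Matrix (Fin n) (Fin n) ℝ)
    (P Z Q U R : Matrix (Fin n) (Fin n) ℝ) (N : Matrix (Fin n) (Fin n ⊕ Fin n) ℝ)
    (hZ : posDef Z)
    (hQsym : Q.IsSymm)
    (hPsi : ∀ T ∈ ({Tmin, Tmax} : Set ℝ), negDef (Psi T A J P Z Q U R N))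
    (hPhi : ∀ T ∈ ({Tmin, Tmax} : Set ℝ), negDef (Phi T A J P Z Q U R N)) :
    ∀ θ ∈ Set.Icc Tmin Tmax, negDef (scrI P A J θ) := by
  intro θ hθ
  have hTmin : Tmin ∈ ({Tmin, Tmax} : Set ℝ) := Set.mem_insert _ _
  have hTmax : Tmax ∈ ({Tmin, Tmax} : Set ℝ) := Set.mem_insert_of_mem _ rfl
  exact negDef_scrI_of_negDef_Psi_Phi (h1.trans_le hθ.1) hQsym hZ.posSemidef
    (negDef_Psi_of_mem_Icc (hPsi _ hTmin) (hPsi _ hTmax) hθ)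
    (negDef_Phi_of_mem_Icc h1 (hPhi _ hTmin) (hPhi _ hTmax) hθ)

/-- Ranged dwell-time, affine conditions: if `Ψ(T) ≺ 0` and `Φ(T) ≺ 0` for
both `T = T_min` and `T = T_max`, then `ℐ(P,A,J,θ) ≺ 0` for every `θ ∈ [T_min, T_max]`. -/
theorem stmt7 {n : ℕ} (Tmin Tmax : ℝ) (h1 : 0 < Tmin) (h2 : Tmin ≤ Tmax)
    (A J : Matrix (Fin n) (Fin n) ℝ)
    (P Z Q U R : Matrix (Fin n) (Fin n) ℝ) (N : Matrix (Fin n) (Fin n ⊕ Fin n) ℝ)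
    (hPsym : P.IsSymm) (hP : posDef P) (hZsym : Z.IsSymm) (hZ : posDef Z)
    (hQsym : Q.IsSymm) (hUsym : U.IsSymm)
    (hPsi : ∀ T ∈ ({Tmin, Tmax} : Set ℝ), negDef (Psi T A J P Z Q U R N))
    (hPhi : ∀ T ∈ ({Tmin, Tmax} : Set ℝ), negDef (Phi T A J P Z Q U R N)) :
    ∀ θ ∈ Set.Icc Tmin Tmax, negDef (scrI P A J θ) :=
  stmt7_general Tmin Tmax h1 A J P Z Q U R N hZ hQsym hPsi hPhi
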